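/- arXiv:1809.02710 — 4 statements merged into one kernel-verified Lean document; each statement's English description precedes it below -/
import Mathlib

section
/- Let A and B be two sets of three points each, all six points in general position, such that the boundaries of their convex hulls (triangles) intersect in exactly two points, both lying on the same edge e of the triangle of A. Then in any crossing-free drawing of spanning trees of A and B, the spanning tree of A omits the edge e, and conversely the spanning tree of A omitting e together with any spanning tree of B avoiding the crossing edges is crossing-free when such a choice exists. -/
/-- No three distinct points of `s` are collinear. -/
def GenPos (s : Set (ℝ × ℝ)) : Prop :=
  ∀ p ∈ s, ∀ q ∈ s, ∀ r ∈ s, p ≠ q → p ≠ r → q ≠ r → ¬ Collinear ℝ ({p, q, r} : Set (ℝ × ℝ))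

/-- Two triangles `A` (vertices `a`) and `B` (vertices `b`), all six points in general
position.  `EA i` / `EB i` are the closed edges opposite vertex `i`, `OEA` / `OEB` their
interiors.  The hull boundaries meet in exactly the two points `x ≠ y`, both interior to
the single edge `EA e` of `A` and interior to the two distinct edges `EB f`, `EB g` of `B`.
Then in any crossing-free pair of spanning trees (omitting edges `oA`, `oB`), the tree of
`A` omits `e` (i.e. `oA = e`); and conversely, if some tree of `B` is crossing-free with
the tree of `A` omitting `e`, this yields a crossing-free drawing. -/
theorem two_crossings_same_edge (a b : Fin 3 → ℝ × ℝ)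
    (ha : Function.Injective a) (hb : Function.Injective b) (hab : ∀ i j, a i ≠ b j)
    (hgp : GenPos (Set.range a ∪ Set.range b))
    (EA OEA EB OEB : Fin 3 → Set (ℝ × ℝ))
    (hEA : ∀ i, EA i = segment ℝ (a (i + 1)) (a (i + 2)))
    (hOEA : ∀ i, OEA i = openSegment ℝ (a (i + 1)) (a (i + 2)))
    (hEB : ∀ i, EB i = segment ℝ (b (i + 1)) (b (i + 2)))
    (hOEB : ∀ i, OEB i = openSegment ℝ (b (i + 1)) (b (i + 2)))
    (e f g : Fin 3) (hfg : f ≠ g) (x y : ℝ × ℝ) (hxy : x ≠ y)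
    (hx : x ∈ OEA e ∩ OEB f) (hy : y ∈ OEA e ∩ OEB g)
    (hbdry : (⋃ i, EA i) ∩ (⋃ j, EB j) = {x, y}) :
    (∀ oA oB : Fin 3,
      (∀ i, i ≠ oA → ∀ j, j ≠ oB → EA i ∩ EB j = ∅) → oA = e) ∧
    ((∃ oB : Fin 3, ∀ i, i ≠ e → ∀ j, j ≠ oB → EA i ∩ EB j = ∅) →
      ∃ oA oB : Fin 3, oA = e ∧ ∀ i, i ≠ oA → ∀ j, j ≠ oB → EA i ∩ EB j = ∅) := by
  have hxe : x ∈ EA e := by rw [hEA]; exact openSegment_subset_segment ℝ _ _ (by rw [← hOEA]; exact hx.1)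
  have hxf : x ∈ EB f := by rw [hEB]; exact openSegment_subset_segment ℝ _ _ (by rw [← hOEB]; exact hx.2)
  have hye : y ∈ EA e := by rw [hEA]; exact openSegment_subset_segment ℝ _ _ (by rw [← hOEA]; exact hy.1)
  have hyg : y ∈ EB g := by rw [hEB]; exact openSegment_subset_segment ℝ _ _ (by rw [← hOEB]; exact hy.2)
  constructor
  · intro oA oB h
    by_contra hne
    have hf : f = oB := by
      by_contra hfB
      have := h e (Ne.symm hne) f hfB
      exact absurd (this ▸ Set.mem_inter hxe hxf) (Set.notMem_empty x)
    have hg : g = oB := by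
      by_contra hgB
      have := h e (Ne.symm hne) g hgB
      exact absurd (this ▸ Set.mem_inter hye hyg) (Set.notMem_empty y)
    exact hfg (hf.trans hg.symm)
  · rintro ⟨oB, hoB⟩
    exact ⟨e, oB, rfl, hoB⟩
end

section
/- If the boundaries of the convex hulls of two triangles A and B (six points in general position) intersect in four or more points, then there is no crossing-free drawing consisting of a spanning tree on A and a spanning tree on B. -/
open Set

namespace AffineMap

variable {E : Type*} [AddCommGroup E] [Module ℝ E] (f : E →ᵃ[ℝ] ℝ) {x y z : E}

theorem mem_uIcc_of_mem_segment (hz : z ∈ segment ℝ x y) : f z ∈ uIcc (f x) (f y) := by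
  rw [← segment_eq_uIcc, ← image_segment]
  exact mem_image_of_mem f hz

theorem nonneg_of_mem_segment (hx : 0 ≤ f x) (hy : 0 ≤ f y) (hz : z ∈ segment ℝ x y) :
    0 ≤ f z :=
  (le_inf hx hy).trans (f.mem_uIcc_of_mem_segment hz).1

theorem pos_of_mem_segment (hx : 0 < f x) (hy : 0 < f y) (hz : z ∈ segment ℝ x y) : 0 < f z :=
  (lt_inf_iff.2 ⟨hx, hy⟩).trans_le (f.mem_uIcc_of_mem_segment hz).1

theorem pos_of_mem_openSegment (hx : 0 < f x) (hy : 0 ≤ f y) (hz : z ∈ openSegment ℝ x y) :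
    0 < f z := by
  rw [openSegment_eq_image_lineMap] at hz
  obtain ⟨t, ht, rfl⟩ := hz
  rw [apply_lineMap, lineMap_apply_ring]
  nlinarith [ht.1, ht.2]

theorem mul_neg_of_mem_segment (hz : z ∈ segment ℝ x y) (hfz : f z = 0) (hx : f x ≠ 0)
    (hy : f y ≠ 0) : f x * f y < 0 := by
  have h := f.mem_uIcc_of_mem_segment hz
  rw [hfz, mem_uIcc] at h
  rcases h with ⟨h₁, h₂⟩ | ⟨h₁, h₂⟩
  · exact mul_neg_of_neg_of_pos (h₁.lt_of_ne hx) (h₂.lt_of_ne hy.symm)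
  · exact mul_neg_of_pos_of_neg (h₂.lt_of_ne hx.symm) (h₁.lt_of_ne hy)

theorem exists_mem_segment_eq_zero (h : 0 ∈ uIcc (f x) (f y)) : ∃ z ∈ segment ℝ x y, f z = 0 := by
  rwa [← segment_eq_uIcc, ← image_segment] at h

theorem eq_zero_of_eq_zero_of_mem_segment {c d : E} (hx : x ∈ segment ℝ c d)
    (hz : z ∈ segment ℝ c d) (hxz : x ≠ z) (hfx : f x = 0) (hfz : f z = 0) : f c = 0 := by
  rw [segment_eq_image_lineMap] at hx hz
  obtain ⟨s, -, rfl⟩ := hx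
  obtain ⟨u, -, rfl⟩ := hz
  rw [apply_lineMap, lineMap_apply_ring] at hfx hfz
  have hsu : s - u ≠ 0 := sub_ne_zero.2 fun h => hxz (by rw [h])
  have : (s - u) * (f d - f c) = 0 := by linear_combination hfx - hfz
  have hcd := (mul_eq_zero.1 this).resolve_left hsu
  linear_combination hfx - s * hcd

end AffineMap

theorem one_lt_encard_diff {α : Type*} {s t : Set α} {k : ℕ∞} (hs : k + 1 < s.encard)
    (ht : (s ∩ t).encard ≤ k) : 1 < (s \ t).encard := by
  by_contra! h
  exact (encard_sdiff_add_encard_inter s t ▸ add_le_add h ht).not_gt (add_comm k 1 ▸ hs)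

theorem nonempty_and_nonempty_of_one_lt_encard {α : Type*} {s u₁ u₂ : Set α}
    (hs : 1 < s.encard) (hsu : s ⊆ u₁ ∪ u₂) (hu₁ : u₁.Subsingleton) (hu₂ : u₂.Subsingleton) :
    u₁.Nonempty ∧ u₂.Nonempty := by
  rw [one_lt_encard_iff_nontrivial] at hs
  refine ⟨nonempty_iff_ne_empty.2 fun h => ?_, nonempty_iff_ne_empty.2 fun h => ?_⟩
  · exact hs.not_subsingleton (hu₂.anti (by simpa [h] using hsu))
  · exact hs.not_subsingleton (hu₁.anti (by simpa [h] using hsu))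

/-- Twice the signed area of the triangle `p q r`, as an affine function of `r`. -/
noncomputable def orient (p q : ℝ × ℝ) : ℝ × ℝ →ᵃ[ℝ] ℝ where
  toFun r := (q.1 - p.1) * (r.2 - p.2) - (q.2 - p.2) * (r.1 - p.1)
  linear := (q.1 - p.1) • LinearMap.snd ℝ ℝ ℝ - (q.2 - p.2) • LinearMap.fst ℝ ℝ ℝ
  map_vadd' r v := by simp; ring

theorem orient_apply (p q r : ℝ × ℝ) :
    orient p q r = (q.1 - p.1) * (r.2 - p.2) - (q.2 - p.2) * (r.1 - p.1) := rfl

theorem orient_rotate (p q r : ℝ × ℝ) : orient p q r = orient q r p := by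
  simp only [orient_apply]; ring

theorem orient_swap (p q r : ℝ × ℝ) : orient q p r = -orient p q r := by
  simp only [orient_apply]; ring

@[simp] theorem orient_self_left (p q : ℝ × ℝ) : orient p q p = 0 := by
  simp [orient_apply]

@[simp] theorem orient_self_right (p q : ℝ × ℝ) : orient p q q = 0 := by
  simp only [orient_apply]; ring

theorem orient_eq_zero_of_mem_segment {x y z : ℝ × ℝ} (hz : z ∈ segment ℝ x y) :
    orient x y z = 0 := by
  simpa using (orient x y).mem_uIcc_of_mem_segment hz

theorem collinear_of_orient_eq_zero {p q r : ℝ × ℝ} (h : orient p q r = 0) :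
    Collinear ℝ ({p, q, r} : Set (ℝ × ℝ)) := by
  rcases eq_or_ne p q with rfl | hpq
  · simpa using collinear_pair ℝ p r
  rw [collinear_iff_of_mem (mem_insert p _)]
  refine ⟨q - p, ?_⟩
  have hn : (q.1 - p.1) ^ 2 + (q.2 - p.2) ^ 2 ≠ 0 := by
    intro h0
    apply hpq
    ext <;> nlinarith [sq_nonneg (q.1 - p.1), sq_nonneg (q.2 - p.2)]
  rintro x (rfl | rfl | rfl)
  · exact ⟨0, by simp⟩
  · exact ⟨1, by simp⟩
  · refine ⟨((x.1 - p.1) * (q.1 - p.1) + (x.2 - p.2) * (q.2 - p.2)) /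
      ((q.1 - p.1) ^ 2 + (q.2 - p.2) ^ 2), ?_⟩
    simp only [orient_apply] at h
    ext <;> simp <;> field_simp
    · linear_combination (p.2 - q.2) * h
    · linear_combination (q.1 - p.1) * h

theorem GenPos.orient_ne_zero {s : Set (ℝ × ℝ)} (h : GenPos s) {p q r : ℝ × ℝ} (hp : p ∈ s)
    (hq : q ∈ s) (hr : r ∈ s) (hpq : p ≠ q) (hpr : p ≠ r) (hqr : q ≠ r) : orient p q r ≠ 0 :=
  fun h0 => h p hp q hq r hr hpq hpr hqr (collinear_of_orient_eq_zero h0)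

theorem mem_segment_of_orient {x y z r : ℝ × ℝ} (hT : 0 < orient x y z) (hr : orient x y r = 0)
    (hx : 0 ≤ orient y z r) (hy : 0 ≤ orient z x r) : r ∈ segment ℝ x y := by
  have hsum : orient y z r + orient z x r = orient x y z := by
    simp only [orient_apply] at hr ⊢; linear_combination -hr
  -- the barycentric coordinates of `r` with respect to `x y z`
  refine ⟨orient y z r / orient x y z, orient z x r / orient x y z, by positivity, by positivity,
    by rw [← add_div, hsum, div_self hT.ne'], ?_⟩
  have hD := hT.ne'
  simp only [orient_apply] at hr hsum hD ⊢
  ext <;> simp <;> field_simp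
  · linear_combination -z.1 * hr
  · linear_combination -z.2 * hr

theorem mem_openSegment_of_orient_ne_zero {x y z c d : ℝ × ℝ} (hz : z ∈ segment ℝ x y)
    (hzcd : z ∈ segment ℝ c d) (hx : orient c d x ≠ 0) (hy : orient c d y ≠ 0) :
    z ∈ openSegment ℝ x y := by
  have hz0 := orient_eq_zero_of_mem_segment hzcd
  exact mem_openSegment_of_ne_left_right (fun h => hx (h ▸ hz0)) (fun h => hy (h ▸ hz0)) hz

theorem subsingleton_segment_inter_segment {c d e f : ℝ × ℝ} (h : orient e f c ≠ 0) :
    (segment ℝ c d ∩ segment ℝ e f).Subsingleton := fun x hx z hz => by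
  by_contra hxz
  exact h ((orient e f).eq_zero_of_eq_zero_of_mem_segment hx.1 hz.1 hxz
    (orient_eq_zero_of_mem_segment hx.2) (orient_eq_zero_of_mem_segment hz.2))

def edge (t : Fin 3 → ℝ × ℝ) (i : Fin 3) : Set (ℝ × ℝ) := segment ℝ (t (i + 1)) (t (i + 2))

theorem edge_add_one (t : Fin 3 → ℝ × ℝ) (o : Fin 3) :
    edge t (o + 1) = segment ℝ (t (o + 2)) (t o) := by
  fin_cases o <;> rfl

theorem edge_add_two (t : Fin 3 → ℝ × ℝ) (o : Fin 3) :
    edge t (o + 2) = segment ℝ (t o) (t (o + 1)) := by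
  fin_cases o <;> rfl

theorem diff_edge_subset (t : Fin 3 → ℝ × ℝ) (o : Fin 3) :
    (⋃ i, edge t i) \ edge t o ⊆ edge t (o + 1) ∪ edge t (o + 2) := by
  rintro x ⟨hx, hxo⟩
  obtain ⟨j, hj⟩ := mem_iUnion.1 hx
  obtain rfl | rfl | rfl : j = o ∨ j = o + 1 ∨ j = o + 2 := by
    fin_cases o <;> fin_cases j <;> simp
  exacts [absurd hj hxo, Or.inl hj, Or.inr hj]

theorem mul_orient_nonneg_of_mem_iUnion_edge (t : Fin 3 → ℝ × ℝ) (i : Fin 3) {x : ℝ × ℝ}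
    (hx : x ∈ ⋃ j, edge t j) :
    0 ≤ orient (t (i + 1)) (t (i + 2)) (t i) * orient (t (i + 1)) (t (i + 2)) x := by
  set f := orient (t (i + 1)) (t (i + 2)) (t i) • orient (t (i + 1)) (t (i + 2))
  have hvertex : ∀ k, 0 ≤ f (t k) := by
    intro k
    obtain rfl | rfl | rfl : k = i ∨ k = i + 1 ∨ k = i + 2 := by
      fin_cases i <;> fin_cases k <;> simp
    all_goals simp [f, mul_self_nonneg]
  obtain ⟨j, hj⟩ := mem_iUnion.1 hx
  exact f.nonneg_of_mem_segment (hvertex _) (hvertex _) hj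

theorem disjoint_openSegment_iUnion_edge {t : Fin 3 → ℝ × ℝ} {c d x z : ℝ × ℝ}
    (ht : ∀ i, orient (t (i + 1)) (t (i + 2)) (t i) ≠ 0)
    (hc : ∀ i, orient (t (i + 1)) (t (i + 2)) c ≠ 0)
    (hx : x ∈ segment ℝ c d ∩ ⋃ i, edge t i) (hz : z ∈ segment ℝ c d ∩ ⋃ i, edge t i)
    (hxz : x ≠ z) : Disjoint (openSegment ℝ x z) (⋃ i, edge t i) := by
  -- `y` lies on the line of a side, with `x` and `z` weakly on the inner side of that line;
  -- so `x`, `z`, and hence `c`, lie on that line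
  refine disjoint_left.2 fun y hy hyT => ?_
  obtain ⟨i, hi⟩ := mem_iUnion.1 hyT
  set f := orient (t (i + 1)) (t (i + 2)) (t i) • orient (t (i + 1)) (t (i + 2))
  have hfy : f y = 0 := by simp [f, orient_eq_zero_of_mem_segment hi]
  have hfx := mul_orient_nonneg_of_mem_iUnion_edge t i hx.2
  have hfz := mul_orient_nonneg_of_mem_iUnion_edge t i hz.2
  have hfx0 : f x = 0 := by
    by_contra hne
    exact (f.pos_of_mem_openSegment (hfx.lt_of_ne' hne) hfz hy).ne' hfy
  have hfz0 : f z = 0 := by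
    by_contra hne
    rw [openSegment_symm] at hy
    exact (f.pos_of_mem_openSegment (hfz.lt_of_ne' hne) hfx hy).ne' hfy
  have hfc := f.eq_zero_of_eq_zero_of_mem_segment hx.1 hz.1 hxz hfx0 hfz0
  simp only [f, AffineMap.coe_smul, Pi.smul_apply, smul_eq_mul, mul_eq_zero] at hfc
  exact hfc.elim (ht i) (hc i)

theorem encard_segment_inter_iUnion_edge_le_two {t : Fin 3 → ℝ × ℝ} {c d : ℝ × ℝ}
    (ht : ∀ i, orient (t (i + 1)) (t (i + 2)) (t i) ≠ 0)
    (hc : ∀ i, orient (t (i + 1)) (t (i + 2)) c ≠ 0) :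
    (segment ℝ c d ∩ ⋃ i, edge t i).encard ≤ 2 := by
  by_contra! h
  obtain ⟨s, hs, hs3⟩ := exists_subset_encard_eq (Order.add_one_le_of_lt h)
  obtain ⟨x, y, z, hxy, hxz, hyz, rfl⟩ := encard_eq_three.1 hs3
  have hx := hs (by simp : x ∈ _)
  have hy := hs (by simp : y ∈ _)
  have hz := hs (by simp : z ∈ _)
  have hline : ∀ p ∈ segment ℝ c d, p ∈ line[ℝ, c, d] := fun p hp =>
    (mem_segment_iff_wbtw.1 hp).mem_affineSpan
  have hmid : ∀ {p q r}, p ∈ segment ℝ c d ∩ ⋃ i, edge t i → q ∈ ⋃ i, edge t i →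
      r ∈ segment ℝ c d ∩ ⋃ i, edge t i → p ≠ q → p ≠ r → q ≠ r → Wbtw ℝ p q r → False :=
    fun hp hq hr hpq hpr hqr hw => (disjoint_openSegment_iUnion_edge ht hc hp hr hpr).ne_of_mem
      (mem_openSegment_of_ne_left_right hpq hqr.symm hw.mem_segment) hq rfl
  rcases (collinear_triple_of_mem_affineSpan_pair (hline _ hx.1) (hline _ hy.1)
    (hline _ hz.1)).wbtw_or_wbtw_or_wbtw with hw | hw | hw
  · exact hmid hx hy.2 hz hxy hxz hyz hw
  · exact hmid hy hz.2 hx hyz hxy.symm hxz.symm hw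
  · exact hmid hz hx.2 hy hxz.symm hyz.symm hxy hw

theorem orient_nonneg_of_disjoint {w b₁ b₂ q a : ℝ × ℝ} (hT : 0 < orient b₁ b₂ w)
    (hq : q ∈ openSegment ℝ b₁ b₂) (ha : 0 ≤ orient b₁ b₂ a)
    (hfree : Disjoint (segment ℝ q a) (segment ℝ w b₁ ∪ segment ℝ b₂ w)) :
    0 ≤ orient w b₁ a := by
  by_contra! ha'
  have hq₀ : orient b₁ b₂ q = 0 :=
    orient_eq_zero_of_mem_segment (openSegment_subset_segment ℝ b₁ b₂ hq)
  have hq₁ : 0 < orient w b₁ q := (orient w b₁).pos_of_mem_openSegment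
    (by rwa [orient_rotate]) (orient_self_right w b₁).ge (openSegment_symm ℝ b₁ b₂ ▸ hq)
  have hq₂ : 0 < orient b₂ w q := (orient b₂ w).pos_of_mem_openSegment
    (by rwa [orient_rotate, orient_rotate]) (orient_self_left b₂ w).ge hq
  obtain ⟨r₁, hr₁, hr₁₀⟩ := (orient w b₁).exists_mem_segment_eq_zero
    (mem_uIcc.2 (Or.inr ⟨ha'.le, hq₁.le⟩))
  have hr₁' : 0 ≤ orient b₁ b₂ r₁ := (orient b₁ b₂).nonneg_of_mem_segment hq₀.ge ha hr₁
  rcases le_or_gt 0 (orient b₂ w r₁) with h | h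
  · exact hfree.ne_of_mem hr₁
      (Or.inl (mem_segment_of_orient (by rwa [orient_rotate]) hr₁₀ hr₁' h)) rfl
  · -- before reaching the line `w b₁`, the segment leaves through the line `b₂ w`
    obtain ⟨r₂, hr₂, hr₂₀⟩ := (orient b₂ w).exists_mem_segment_eq_zero
      (mem_uIcc.2 (Or.inr ⟨h.le, hq₂.le⟩))
    have hr₂T : r₂ ∈ segment ℝ b₂ w := mem_segment_of_orient
      (by rwa [orient_rotate, orient_rotate]) hr₂₀
      ((orient w b₁).nonneg_of_mem_segment hq₁.le hr₁₀.ge hr₂)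
      ((orient b₁ b₂).nonneg_of_mem_segment hq₀.ge hr₁' hr₂)
    exact hfree.ne_of_mem ((convex_segment q a).segment_subset (left_mem_segment ℝ q a) hr₁ hr₂)
      (Or.inr hr₂T) rfl

theorem false_of_crossings_of_pos {v a₁ a₂ w b₁ b₂ q₁ q₂ r : ℝ × ℝ} (hT : 0 < orient b₁ b₂ w)
    (hv : orient b₁ b₂ v ≠ 0) (ha₁ : orient b₁ b₂ a₁ ≠ 0) (ha₂ : orient b₁ b₂ a₂ ≠ 0)
    (ha₁' : orient w b₁ a₁ ≠ 0) (ha₂' : orient w b₁ a₂ ≠ 0)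
    (hq₁ : q₁ ∈ segment ℝ v a₁ ∩ openSegment ℝ b₁ b₂)
    (hq₂ : q₂ ∈ segment ℝ v a₂ ∩ openSegment ℝ b₁ b₂)
    (hr : r ∈ segment ℝ a₁ a₂ ∩ segment ℝ w b₁)
    (hfree : Disjoint (segment ℝ v a₁ ∪ segment ℝ v a₂) (segment ℝ w b₁ ∪ segment ℝ b₂ w)) :
    False := by
  have hq₁₀ := orient_eq_zero_of_mem_segment (openSegment_subset_segment ℝ b₁ b₂ hq₁.2)
  have hq₂₀ := orient_eq_zero_of_mem_segment (openSegment_subset_segment ℝ b₁ b₂ hq₂.2)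
  have hva₁ := (orient b₁ b₂).mul_neg_of_mem_segment hq₁.1 hq₁₀ hv ha₁
  have hva₂ := (orient b₁ b₂).mul_neg_of_mem_segment hq₂.1 hq₂₀ hv ha₂
  -- `r` lies on the side of `w`, so `v` lies on the other side of the line `b₁ b₂`
  have hv_neg : orient b₁ b₂ v < 0 := by
    refine lt_of_not_ge fun hv_nonneg => ?_
    have hr₀ : 0 ≤ orient b₁ b₂ r :=
      (orient b₁ b₂).nonneg_of_mem_segment hT.le (orient_self_left b₁ b₂).ge hr.2
    have hr_le := ((orient b₁ b₂).mem_uIcc_of_mem_segment hr.1).2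
    exact (hr₀.trans hr_le).not_gt (max_lt (neg_of_mul_neg_right hva₁ hv_nonneg)
      (neg_of_mul_neg_right hva₂ hv_nonneg))
  have hside : ∀ {a q}, orient w b₁ a ≠ 0 → orient b₁ b₂ v * orient b₁ b₂ a < 0 →
      q ∈ segment ℝ v a ∩ openSegment ℝ b₁ b₂ →
      Disjoint (segment ℝ v a) (segment ℝ w b₁ ∪ segment ℝ b₂ w) → 0 < orient w b₁ a :=
    fun ha' hva hq hfree => (orient_nonneg_of_disjoint hT hq.2 (pos_of_mul_neg_right hva
      hv_neg.le).le (hfree.mono_left ((convex_segment _ _).segment_subset hq.1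
        (right_mem_segment ℝ _ _)))).lt_of_ne' ha'
  have hr_pos := (orient w b₁).pos_of_mem_segment
    (hside ha₁' hva₁ hq₁ (hfree.mono_left subset_union_left))
    (hside ha₂' hva₂ hq₂ (hfree.mono_left subset_union_right)) hr.1
  exact hr_pos.ne' (orient_eq_zero_of_mem_segment hr.2)

theorem edge_inter_edges_nonempty {s t : Fin 3 → ℝ × ℝ} {os ot : Fin 3}
    (hst : ∀ i j k, i ≠ j → orient (s i) (s j) (t k) ≠ 0)
    (hts : ∀ i j k, i ≠ j → orient (t i) (t j) (s k) ≠ 0)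
    (hs : ∀ i, orient (s (i + 1)) (s (i + 2)) (s i) ≠ 0)
    (hcover : (⋃ i, edge s i) ∩ (⋃ j, edge t j) ⊆ edge s os ∪ edge t ot)
    (hcard : 3 < ((⋃ i, edge s i) ∩ ⋃ j, edge t j).encard) :
    (edge s os ∩ edge t (ot + 1)).Nonempty ∧ (edge s os ∩ edge t (ot + 2)).Nonempty := by
  have hsub : ((⋃ i, edge s i) ∩ ⋃ j, edge t j) ∩ edge t ot ⊆
      segment ℝ (t (ot + 1)) (t (ot + 2)) ∩ ⋃ i, edge s i := fun x hx => ⟨hx.2, hx.1.1⟩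
  have hot := (encard_le_encard hsub).trans
    (encard_segment_inter_iUnion_edge_le_two hs fun i => hst _ _ _ (by simp))
  refine nonempty_and_nonempty_of_one_lt_encard (one_lt_encard_diff hcard hot) ?_
    (subsingleton_segment_inter_segment (hts _ _ _ (by simp)))
    (subsingleton_segment_inter_segment (hts _ _ _ (by simp)))
  rintro x ⟨hx, hxot⟩
  rw [← inter_union_distrib_left]
  exact ⟨(hcover hx).resolve_right hxot, diff_edge_subset t ot ⟨hx.2, hxot⟩⟩

theorem false_of_edges_cross {a b : Fin 3 → ℝ × ℝ} {oA oB : Fin 3}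
    (hab : ∀ i j k, i ≠ j → orient (a i) (a j) (b k) ≠ 0)
    (hba : ∀ i j k, i ≠ j → orient (b i) (b j) (a k) ≠ 0)
    (hb : ∀ i, orient (b (i + 1)) (b (i + 2)) (b i) ≠ 0)
    (hfree : ∀ i, i ≠ oA → ∀ j, j ≠ oB → edge a i ∩ edge b j = ∅)
    (hq₁ : (edge b oB ∩ edge a (oA + 2)).Nonempty) (hq₂ : (edge b oB ∩ edge a (oA + 1)).Nonempty)
    (hr₁ : (edge a oA ∩ edge b (oB + 2)).Nonempty) (hr₂ : (edge a oA ∩ edge b (oB + 1)).Nonempty) :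
    False := by
  have hdisj : ∀ i, i ≠ oA → ∀ j, j ≠ oB → Disjoint (edge a i) (edge b j) :=
    fun i hi j hj => disjoint_iff_inter_eq_empty.2 (hfree i hi j hj)
  have hfree' := disjoint_union_left.2
    ⟨disjoint_union_right.2 ⟨hdisj (oA + 2) (by simp) (oB + 2) (by simp),
        hdisj (oA + 2) (by simp) (oB + 1) (by simp)⟩,
      disjoint_union_right.2 ⟨hdisj (oA + 1) (by simp) (oB + 2) (by simp),
        hdisj (oA + 1) (by simp) (oB + 1) (by simp)⟩⟩
  simp only [edge_add_one, edge_add_two] at hfree' hq₁ hq₂ hr₁ hr₂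
  rw [segment_symm ℝ (a (oA + 2))] at hfree' hq₂
  obtain ⟨q₁, hq₁B, hq₁A⟩ := hq₁
  obtain ⟨q₂, hq₂B, hq₂A⟩ := hq₂
  obtain ⟨r₁, hr₁⟩ := hr₁
  obtain ⟨r₂, hr₂⟩ := hr₂
  have hq₁' := mem_openSegment_of_orient_ne_zero hq₁B hq₁A (hab _ _ _ (by simp))
    (hab _ _ _ (by simp))
  have hq₂' := mem_openSegment_of_orient_ne_zero hq₂B hq₂A (hab _ _ _ (by simp))
    (hab _ _ _ (by simp))
  rcases (hb oB).lt_or_gt with hneg | hpos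
  · rw [segment_symm ℝ (b (oB + 2)), segment_symm ℝ (b oB), union_comm (segment ℝ _ (b oB))]
      at hfree'
    rw [segment_symm ℝ (b (oB + 2))] at hr₂
    rw [openSegment_symm] at hq₁' hq₂'
    exact false_of_crossings_of_pos (by rwa [orient_swap, neg_pos]) (hba _ _ _ (by simp))
      (hba _ _ _ (by simp)) (hba _ _ _ (by simp)) (hba _ _ _ (by simp)) (hba _ _ _ (by simp))
      ⟨hq₁A, hq₁'⟩ ⟨hq₂A, hq₂'⟩ hr₂ hfree'
  · exact false_of_crossings_of_pos hpos (hba _ _ _ (by simp)) (hba _ _ _ (by simp))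
      (hba _ _ _ (by simp)) (hba _ _ _ (by simp)) (hba _ _ _ (by simp))
      ⟨hq₁A, hq₁'⟩ ⟨hq₂A, hq₂'⟩ hr₁ hfree'

theorem encard_inter_le_three_of_crossing_free {a b : Fin 3 → ℝ × ℝ} {oA oB : Fin 3}
    (hab : ∀ i j k, i ≠ j → orient (a i) (a j) (b k) ≠ 0)
    (hba : ∀ i j k, i ≠ j → orient (b i) (b j) (a k) ≠ 0)
    (ha : ∀ i, orient (a (i + 1)) (a (i + 2)) (a i) ≠ 0)
    (hb : ∀ i, orient (b (i + 1)) (b (i + 2)) (b i) ≠ 0)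
    (hfree : ∀ i, i ≠ oA → ∀ j, j ≠ oB → edge a i ∩ edge b j = ∅) :
    ((⋃ i, edge a i) ∩ ⋃ j, edge b j).encard ≤ 3 := by
  by_contra! hcard
  have hcover : (⋃ i, edge a i) ∩ (⋃ j, edge b j) ⊆ edge a oA ∪ edge b oB := by
    rintro x ⟨hxa, hxb⟩
    obtain ⟨i, hi⟩ := mem_iUnion.1 hxa
    obtain ⟨j, hj⟩ := mem_iUnion.1 hxb
    by_contra h
    rw [mem_union, not_or] at h
    exact (hfree i (fun e => h.1 (e ▸ hi)) j (fun e => h.2 (e ▸ hj))).subset ⟨hi, hj⟩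
  obtain ⟨hr₂, hr₁⟩ := edge_inter_edges_nonempty hab hba ha hcover hcard
  obtain ⟨hq₂, hq₁⟩ := edge_inter_edges_nonempty hba hab hb
    (by rwa [inter_comm, union_comm]) (by rwa [inter_comm])
  exact false_of_edges_cross hab hba hb hfree hq₁ hq₂ hr₁ hr₂

theorem orient_ne_zero_of_genPos {a b : Fin 3 → ℝ × ℝ} (hgp : GenPos (range a ∪ range b))
    (ha : Function.Injective a) (hab : ∀ i j, a i ≠ b j) :
    (∀ i j k, i ≠ j → orient (a i) (a j) (b k) ≠ 0) ∧
      ∀ i, orient (a (i + 1)) (a (i + 2)) (a i) ≠ 0 :=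
  ⟨fun i j k hij => hgp.orient_ne_zero (.inl ⟨i, rfl⟩) (.inl ⟨j, rfl⟩) (.inr ⟨k, rfl⟩)
      (ha.ne hij) (hab i k) (hab j k),
    fun i => hgp.orient_ne_zero (.inl ⟨_, rfl⟩) (.inl ⟨_, rfl⟩) (.inl ⟨i, rfl⟩)
      (ha.ne (by simp)) (ha.ne (by simp)) (ha.ne (by simp))⟩

/-- Two triangles `A` (vertices `a`) and `B` (vertices `b`), six points in general position,
with `EA i` / `EB i` the closed edges opposite vertex `i`.  If the hull boundaries (unions
of the edges) intersect in four or more points, then no pair of spanning trees (each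
obtained by omitting one edge) is crossing-free. -/
theorem no_trees_when_four_crossings (a b : Fin 3 → ℝ × ℝ)
    (ha : Function.Injective a) (hb : Function.Injective b) (hab : ∀ i j, a i ≠ b j)
    (hgp : GenPos (Set.range a ∪ Set.range b))
    (EA EB : Fin 3 → Set (ℝ × ℝ))
    (hEA : ∀ i, EA i = segment ℝ (a (i + 1)) (a (i + 2)))
    (hEB : ∀ i, EB i = segment ℝ (b (i + 1)) (b (i + 2)))
    (hcard : 4 ≤ ((⋃ i, EA i) ∩ (⋃ j, EB j)).ncard) :
    ¬ ∃ oA oB : Fin 3, ∀ i, i ≠ oA → ∀ j, j ≠ oB → EA i ∩ EB j = ∅ := by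
  rintro ⟨oA, oB, hfree⟩
  obtain rfl : EA = edge a := funext hEA
  obtain rfl : EB = edge b := funext hEB
  obtain ⟨hab', ha'⟩ := orient_ne_zero_of_genPos hgp ha hab
  obtain ⟨hba', hb'⟩ := orient_ne_zero_of_genPos (union_comm (range a) _ ▸ hgp) hb
    fun i j => (hab j i).symm
  have h3 := (ncard_le_encard _).trans
    (encard_inter_le_three_of_crossing_free hab' hba' ha' hb' hfree)
  norm_cast at h3
  omega
end

section
/- Let P be a partition of a finite planar point set into color classes each of size at most 3. Any choice of one segment per crossing pair constraint can be encoded as a 2-SAT instance: there exists a crossing-free spanning forest respecting the partition if and only if there is a selection S of 'potential edges' (segments between same-color points) such that (i) every point whose class has size greater than 1 is an endpoint of some segment in S, and (ii) no two segments in S cross in their interiors. -/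
/-- The (undirected) edge between `p` and `q` belongs to the edge set `S`. -/
def EdgeIn (S : Set ((ℝ × ℝ) × (ℝ × ℝ))) (p q : ℝ × ℝ) : Prop := (p, q) ∈ S ∨ (q, p) ∈ S

/-- `p` and `q` are connected by the edges of `S`. -/
def Conn (S : Set ((ℝ × ℝ) × (ℝ × ℝ))) (p q : ℝ × ℝ) : Prop :=
  Relation.ReflTransGen (EdgeIn S) p q

lemma edgeIn_symm {S : Set ((ℝ × ℝ) × (ℝ × ℝ))} {p q : ℝ × ℝ} (h : EdgeIn S p q) :
    EdgeIn S q p := Or.symm h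

lemma collinear_of_mem_openSegment {x a b : ℝ × ℝ} (h : x ∈ openSegment ℝ a b) :
    Collinear ℝ ({x, a, b} : Set (ℝ × ℝ)) := by
  have hx : x ∈ segment ℝ a b := openSegment_subset_segment _ _ _ h
  rw [segment_eq_image_lineMap] at hx
  obtain ⟨t, _, rfl⟩ := hx
  exact collinear_insert_of_mem_affineSpan_pair (AffineMap.lineMap_mem_affineSpan_pair t a b)

/-- 2-SAT reformulation for color classes of size at most 3 (points in general position):
there is a crossing-free spanning forest respecting the partition (edges join same-colored
points of `P`, each color class is connected, and two segments spanning different point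
pairs meet only in shared endpoints) if and only if there is a selection `S` of potential
edges such that (i) every point whose color class has at least two points is an endpoint of
a segment of `S` and (ii) no two segments of `S` cross in their interiors. -/
theorem spanning_forest_iff_two_sat_selection (P : Finset (ℝ × ℝ)) (c : (ℝ × ℝ) → ℕ)
    (hgp : GenPos ↑P)
    (hsize : ∀ p ∈ P, (P.filter (fun q => c q = c p)).card ≤ 3) :
    (∃ F : Set ((ℝ × ℝ) × (ℝ × ℝ)),
        (∀ e ∈ F, e.1 ∈ P ∧ e.2 ∈ P ∧ e.1 ≠ e.2 ∧ c e.1 = c e.2) ∧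
        (∀ p ∈ P, ∀ q ∈ P, c p = c q → Conn F p q) ∧
        (∀ e ∈ F, ∀ f ∈ F, ({e.1, e.2} : Set (ℝ × ℝ)) ≠ {f.1, f.2} →
          segment ℝ e.1 e.2 ∩ segment ℝ f.1 f.2 ⊆ ({e.1, e.2} ∩ {f.1, f.2} : Set (ℝ × ℝ))))
    ↔
    (∃ S : Set ((ℝ × ℝ) × (ℝ × ℝ)),
        (∀ e ∈ S, e.1 ∈ P ∧ e.2 ∈ P ∧ e.1 ≠ e.2 ∧ c e.1 = c e.2) ∧
        (∀ p ∈ P, 2 ≤ (P.filter (fun q => c q = c p)).card → ∃ e ∈ S, p = e.1 ∨ p = e.2) ∧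
        (∀ e ∈ S, ∀ f ∈ S, ({e.1, e.2} : Set (ℝ × ℝ)) ≠ {f.1, f.2} →
          openSegment ℝ e.1 e.2 ∩ openSegment ℝ f.1 f.2 = ∅)) := by
  constructor
  · rintro ⟨F, hF1, hF2, hF3⟩
    refine ⟨F, hF1, ?_, ?_⟩
    · intro p hp hcard
      have hpmem : p ∈ P.filter (fun q => c q = c p) := Finset.mem_filter.2 ⟨hp, rfl⟩
      obtain ⟨q, hq, hqp⟩ :=
        Finset.exists_mem_ne (by omega : 1 < (P.filter (fun q => c q = c p)).card) p
      have hq' := Finset.mem_filter.1 hq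
      have hconn : Conn F p q := hF2 p hp q hq'.1 hq'.2.symm
      rcases hconn.cases_head with h | ⟨x, hx, _⟩
      · exact absurd h.symm hqp
      · rcases hx with h | h
        · exact ⟨(p, x), h, Or.inl rfl⟩
        · exact ⟨(x, p), h, Or.inr rfl⟩
    · intro e he f hf hne
      ext x
      simp only [Set.mem_inter_iff, Set.mem_empty_iff_false, iff_false, not_and]
      intro hxe hxf
      have hx1 : x ∈ segment ℝ e.1 e.2 ∩ segment ℝ f.1 f.2 :=
        ⟨openSegment_subset_segment _ _ _ hxe, openSegment_subset_segment _ _ _ hxf⟩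
      have hmem := hF3 e he f hf hne hx1
      have hee := (hF1 e he).2.2.1
      rcases hmem.1 with h | h
      · subst h
        exact hee (left_mem_openSegment_iff.1 hxe)
      · have h' : x = e.2 := h
        subst h'
        exact hee (right_mem_openSegment_iff.1 hxe)
  · rintro ⟨S, hS1, hS2, hS3⟩
    -- pick a neighbor of any point whose class has size ≥ 2
    have nb : ∀ p ∈ P, 2 ≤ (P.filter (fun q => c q = c p)).card →
        ∃ a, EdgeIn S p a ∧ a ∈ P ∧ a ≠ p ∧ c a = c p := by
      intro p hp hc
      obtain ⟨e, he, hpe⟩ := hS2 p hp hc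
      obtain ⟨h1, h2, h3, h4⟩ := hS1 e he
      rcases hpe with h | h
      · subst h
        exact ⟨e.2, Or.inl he, h2, Ne.symm h3, h4.symm⟩
      · subst h
        exact ⟨e.1, Or.inr he, h1, h3, h4⟩
    refine ⟨S, hS1, ?_, ?_⟩
    · -- connectivity within each color class (classes have size ≤ 3)
      intro p hp q hq hpq
      by_cases hpq' : p = q
      · subst hpq'; exact Relation.ReflTransGen.refl
      have hpmem : p ∈ P.filter (fun r => c r = c p) := Finset.mem_filter.2 ⟨hp, rfl⟩
      have hqmem : q ∈ P.filter (fun r => c r = c p) := Finset.mem_filter.2 ⟨hq, hpq.symm⟩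
      have hfilter_eq : P.filter (fun r => c r = c q) = P.filter (fun r => c r = c p) := by
        simp [hpq]
      have hcard : 2 ≤ (P.filter (fun r => c r = c p)).card :=
        Finset.one_lt_card.2 ⟨p, hpmem, q, hqmem, hpq'⟩
      obtain ⟨a, ha1, ha2, ha3, ha4⟩ := nb p hp hcard
      obtain ⟨b, hb1, hb2, hb3, hb4⟩ := nb q hq (by rw [hfilter_eq]; exact hcard)
      by_cases haq : a = q
      · exact Relation.ReflTransGen.single (haq ▸ ha1)
      by_cases hbp : b = p
      · exact Relation.ReflTransGen.single (edgeIn_symm (hbp ▸ hb1))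
      have hamem : a ∈ P.filter (fun r => c r = c p) := Finset.mem_filter.2 ⟨ha2, ha4⟩
      have hbmem : b ∈ P.filter (fun r => c r = c p) :=
        Finset.mem_filter.2 ⟨hb2, by rw [hb4, hpq.symm]⟩
      have hab : a = b := by
        by_contra hne
        have hsub : ({p, q, a, b} : Finset (ℝ × ℝ)) ⊆ P.filter (fun r => c r = c p) := by
          intro x hx
          simp only [Finset.mem_insert, Finset.mem_singleton] at hx
          rcases hx with rfl | rfl | rfl | rfl
          · exact hpmem
          · exact hqmem
          · exact hamem
          · exact hbmem
        have hc4 : ({p, q, a, b} : Finset (ℝ × ℝ)).card = 4 := by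
          rw [Finset.card_insert_of_notMem (by simp [hpq', Ne.symm ha3, Ne.symm hbp]),
            Finset.card_insert_of_notMem (by simp [Ne.symm haq, Ne.symm hb3]),
            Finset.card_insert_of_notMem (by simp [hne]), Finset.card_singleton]
        have := Finset.card_le_card hsub
        have := hsize p hp
        omega
      subst hab
      exact Relation.ReflTransGen.tail (Relation.ReflTransGen.single ha1) (edgeIn_symm hb1)
    · -- segments of S meet only in shared endpoints
      intro e he f hf hne x hx
      obtain ⟨he1, he2, he3, he4⟩ := hS1 e he
      obtain ⟨hf1, hf2, hf3, hf4⟩ := hS1 f hf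
      have hx1 := hx.1
      have hx2 := hx.2
      rw [← insert_endpoints_openSegment] at hx1 hx2
      simp only [Set.mem_insert_iff] at hx1 hx2
      -- helpers: an interior point would force a collinearity with a point of P
      have interior_e : x ∈ openSegment ℝ e.1 e.2 → x ∈ (P : Set (ℝ × ℝ)) → False := by
        intro hop hxP
        have hxne1 : x ≠ e.1 := by
          rintro rfl; exact he3 (left_mem_openSegment_iff.1 hop)
        have hxne2 : x ≠ e.2 := by
          rintro rfl; exact he3 (right_mem_openSegment_iff.1 hop)
        exact hgp x hxP e.1 he1 e.2 he2 hxne1 hxne2 he3 (collinear_of_mem_openSegment hop)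
      have interior_f : x ∈ openSegment ℝ f.1 f.2 → x ∈ (P : Set (ℝ × ℝ)) → False := by
        intro hop hxP
        have hxne1 : x ≠ f.1 := by
          rintro rfl; exact hf3 (left_mem_openSegment_iff.1 hop)
        have hxne2 : x ≠ f.2 := by
          rintro rfl; exact hf3 (right_mem_openSegment_iff.1 hop)
        exact hgp x hxP f.1 hf1 f.2 hf2 hxne1 hxne2 hf3 (collinear_of_mem_openSegment hop)
      rcases hx1 with h1 | h1 | h1
      · rcases hx2 with h2 | h2 | h2
        · exact ⟨by simp [h1], by simp [h2]⟩
        · exact ⟨by simp [h1], by simp [h2]⟩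
        · exact absurd (interior_f h2 (by rw [h1]; exact he1)) (by simp)
      · rcases hx2 with h2 | h2 | h2
        · exact ⟨by simp [h1], by simp [h2]⟩
        · exact ⟨by simp [h1], by simp [h2]⟩
        · exact absurd (interior_f h2 (by rw [h1]; exact he2)) (by simp)
      · rcases hx2 with h2 | h2 | h2
        · exact absurd (interior_e h1 (by rw [h2]; exact hf1)) (by simp)
        · exact absurd (interior_e h1 (by rw [h2]; exact hf2)) (by simp)
        · have := hS3 e he f hf hne
          have : x ∈ (∅ : Set (ℝ × ℝ)) := this ▸ Set.mem_inter h1 h2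
          exact absurd this (by simp)
end

section
/- Let R = {r₁, r₂, r₃} and B = {b₁, b₂, b₃} be two triangles in general position whose boundaries intersect in exactly the two points (segment b₁b₂ ∩ segment r₁r₂) and (segment b₁b₃ ∩ segment r₁r₃). Then there are exactly two pairs (T_R, T_B) of spanning trees on R and B whose union is crossing-free: {r₁r₂, r₂r₃} with {b₁b₃, b₂b₃}, and {r₁r₃, r₂r₃} with {b₁b₂, b₂b₃}. -/
/-- If `x` lies in the open segment `ab` and also on the segment `ac`, then `a, b, c` are
collinear. -/
lemma collinear_of_mem_two_segments {a b c x : ℝ × ℝ} (hab : a ≠ b)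
    (h1 : x ∈ openSegment ℝ a b) (h2 : x ∈ segment ℝ a c) :
    Collinear ℝ ({a, b, c} : Set (ℝ × ℝ)) := by
  have hxa : x ≠ a := by
    rintro rfl
    exact hab (left_mem_openSegment_iff.mp h1)
  have hx1 : x ∈ line[ℝ, a, b] :=
    (AffineSubspace.convex _).segment_subset (left_mem_affineSpan_pair ℝ a b)
      (right_mem_affineSpan_pair ℝ a b) (openSegment_subset_segment ℝ a b h1)
  have hx2 : x ∈ line[ℝ, a, c] :=
    (AffineSubspace.convex _).segment_subset (left_mem_affineSpan_pair ℝ a c)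
      (right_mem_affineSpan_pair ℝ a c) h2
  have hcb : Collinear ℝ ({x, a, b} : Set (ℝ × ℝ)) := collinear_insert_of_mem_affineSpan_pair hx1
  have hcc : Collinear ℝ ({x, a, c} : Set (ℝ × ℝ)) := collinear_insert_of_mem_affineSpan_pair hx2
  have hb : b ∈ line[ℝ, a, x] :=
    hcb.mem_affineSpan_of_mem_of_ne (by simp) (by simp) (by simp) hxa.symm
  have hc : c ∈ line[ℝ, a, x] :=
    hcc.mem_affineSpan_of_mem_of_ne (by simp) (by simp) (by simp) hxa.symm
  exact collinear_triple_of_mem_affineSpan_pair (left_mem_affineSpan_pair ℝ a x) hb hc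

/-- Wire gadget: triangles `R = {r₁,r₂,r₃}` and `B = {b₁,b₂,b₃}` in general position whose
boundaries intersect in exactly the two points `x = b₁b₂ ∩ r₁r₂` and `y = b₁b₃ ∩ r₁r₃`.
Edges are indexed by `ER 0 = r₁r₂`, `ER 1 = r₁r₃`, `ER 2 = r₂r₃` and
`EB 0 = b₁b₂`, `EB 1 = b₁b₃`, `EB 2 = b₂b₃`; a spanning tree is determined by its omitted
edge.  Then a pair of spanning trees (omitting `oR`, `oB`) is crossing-free if and only if
it is one of the two pairs `({r₁r₂, r₂r₃}, {b₁b₃, b₂b₃})` (omit `ER 1` and `EB 0`) and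
`({r₁r₃, r₂r₃}, {b₁b₂, b₂b₃})` (omit `ER 0` and `EB 1`). -/
theorem wire_gadget_two_states (r1 r2 r3 b1 b2 b3 : ℝ × ℝ)
    (hdist : ([r1, r2, r3, b1, b2, b3] : List (ℝ × ℝ)).Nodup)
    (hgp : GenPos {r1, r2, r3, b1, b2, b3})
    (ER EB : Fin 3 → Set (ℝ × ℝ))
    (hER0 : ER 0 = segment ℝ r1 r2) (hER1 : ER 1 = segment ℝ r1 r3)
    (hER2 : ER 2 = segment ℝ r2 r3)
    (hEB0 : EB 0 = segment ℝ b1 b2) (hEB1 : EB 1 = segment ℝ b1 b3)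
    (hEB2 : EB 2 = segment ℝ b2 b3)
    (x y : ℝ × ℝ) (hxy : x ≠ y)
    (hx : x ∈ openSegment ℝ b1 b2 ∩ openSegment ℝ r1 r2)
    (hy : y ∈ openSegment ℝ b1 b3 ∩ openSegment ℝ r1 r3)
    (hbdry : (⋃ i, ER i) ∩ (⋃ j, EB j) = {x, y}) :
    ∀ oR oB : Fin 3,
      (∀ i, i ≠ oR → ∀ j, j ≠ oB → ER i ∩ EB j = ∅) ↔
        ((oR, oB) = ((1 : Fin 3), (0 : Fin 3)) ∨ (oR, oB) = ((0 : Fin 3), (1 : Fin 3))) := by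
  simp only [List.nodup_cons, List.mem_cons, List.not_mem_nil, or_false, List.mem_singleton,
    List.nodup_nil, and_true, not_or] at hdist
  obtain ⟨⟨h12, h13, _, _, _⟩, ⟨h23, _, _, _⟩, ⟨_, _, _⟩, ⟨hb12, hb13⟩, hb23, _⟩ := hdist
  -- x lies only on ER 0 and EB 0; y only on ER 1 and EB 1
  have hxER1 : x ∉ ER 1 := by
    rw [hER1]; intro h
    exact hgp r1 (by simp) r2 (by simp) r3 (by simp) h12 h13 h23
      (collinear_of_mem_two_segments h12 hx.2 h)
  have hxER2 : x ∉ ER 2 := by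
    rw [hER2]; intro h
    have := collinear_of_mem_two_segments (Ne.symm h12) (by rw [openSegment_symm]; exact hx.2) h
    exact hgp r2 (by simp) r1 (by simp) r3 (by simp) (Ne.symm h12) h23 h13 this
  have hxEB1 : x ∉ EB 1 := by
    rw [hEB1]; intro h
    exact hgp b1 (by simp) b2 (by simp) b3 (by simp) hb12 hb13 hb23
      (collinear_of_mem_two_segments hb12 hx.1 h)
  have hxEB2 : x ∉ EB 2 := by
    rw [hEB2]; intro h
    have := collinear_of_mem_two_segments (Ne.symm hb12) (by rw [openSegment_symm]; exact hx.1) h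
    exact hgp b2 (by simp) b1 (by simp) b3 (by simp) (Ne.symm hb12) hb23 hb13 this
  have hyER0 : y ∉ ER 0 := by
    rw [hER0]; intro h
    exact hgp r1 (by simp) r3 (by simp) r2 (by simp) h13 h12 (Ne.symm h23)
      (collinear_of_mem_two_segments h13 hy.2 h)
  have hyER2 : y ∉ ER 2 := by
    rw [hER2]; intro h
    have := collinear_of_mem_two_segments (Ne.symm h13)
      (by rw [openSegment_symm]; exact hy.2) (by rwa [segment_symm] at h)
    exact hgp r3 (by simp) r1 (by simp) r2 (by simp) (Ne.symm h13) (Ne.symm h23) h12 this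
  have hyEB0 : y ∉ EB 0 := by
    rw [hEB0]; intro h
    exact hgp b1 (by simp) b3 (by simp) b2 (by simp) hb13 hb12 (Ne.symm hb23)
      (collinear_of_mem_two_segments hb13 hy.1 h)
  have hyEB2 : y ∉ EB 2 := by
    rw [hEB2]; intro h
    have := collinear_of_mem_two_segments (Ne.symm hb13)
      (by rw [openSegment_symm]; exact hy.1) (by rwa [segment_symm] at h)
    exact hgp b3 (by simp) b1 (by simp) b2 (by simp) (Ne.symm hb13) (Ne.symm hb23) hb12 this
  have esub : ∀ i j z, z ∈ ER i ∩ EB j → z = x ∨ z = y := by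
    intro i j z hz
    have : z ∈ (⋃ i, ER i) ∩ (⋃ j, EB j) :=
      ⟨Set.mem_iUnion.2 ⟨i, hz.1⟩, Set.mem_iUnion.2 ⟨j, hz.2⟩⟩
    rw [hbdry] at this
    exact this
  have hxE : x ∈ ER 0 ∩ EB 0 := by
    rw [hER0, hEB0]
    exact ⟨openSegment_subset_segment ℝ _ _ hx.2, openSegment_subset_segment ℝ _ _ hx.1⟩
  have hyE : y ∈ ER 1 ∩ EB 1 := by
    rw [hER1, hEB1]
    exact ⟨openSegment_subset_segment ℝ _ _ hy.2, openSegment_subset_segment ℝ _ _ hy.1⟩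
  have e01 : ER 0 ∩ EB 1 = ∅ := Set.eq_empty_iff_forall_notMem.2 fun z hz => by
    rcases esub 0 1 z hz with rfl | rfl
    exacts [hxEB1 hz.2, hyER0 hz.1]
  have e02 : ER 0 ∩ EB 2 = ∅ := Set.eq_empty_iff_forall_notMem.2 fun z hz => by
    rcases esub 0 2 z hz with rfl | rfl
    exacts [hxEB2 hz.2, hyER0 hz.1]
  have e10 : ER 1 ∩ EB 0 = ∅ := Set.eq_empty_iff_forall_notMem.2 fun z hz => by
    rcases esub 1 0 z hz with rfl | rfl
    exacts [hxER1 hz.1, hyEB0 hz.2]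
  have e12 : ER 1 ∩ EB 2 = ∅ := Set.eq_empty_iff_forall_notMem.2 fun z hz => by
    rcases esub 1 2 z hz with rfl | rfl
    exacts [hxER1 hz.1, hyEB2 hz.2]
  have e20 : ER 2 ∩ EB 0 = ∅ := Set.eq_empty_iff_forall_notMem.2 fun z hz => by
    rcases esub 2 0 z hz with rfl | rfl
    exacts [hxER2 hz.1, hyER2 hz.1]
  have e21 : ER 2 ∩ EB 1 = ∅ := Set.eq_empty_iff_forall_notMem.2 fun z hz => by
    rcases esub 2 1 z hz with rfl | rfl
    exacts [hxER2 hz.1, hyER2 hz.1]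
  have e22 : ER 2 ∩ EB 2 = ∅ := Set.eq_empty_iff_forall_notMem.2 fun z hz => by
    rcases esub 2 2 z hz with rfl | rfl
    exacts [hxER2 hz.1, hyER2 hz.1]
  intro oR oB
  constructor
  · intro h
    have c0 : oR = 0 ∨ oB = 0 := by
      by_contra hc
      push_neg at hc
      have := h 0 (Ne.symm hc.1) 0 (Ne.symm hc.2)
      rw [this] at hxE
      exact hxE
    have c1 : oR = 1 ∨ oB = 1 := by
      by_contra hc
      push_neg at hc
      have := h 1 (Ne.symm hc.1) 1 (Ne.symm hc.2)
      rw [this] at hyE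
      exact hyE
    rcases c0 with rfl | rfl
    · rcases c1 with h' | rfl
      · exact absurd h' (by decide)
      · right; rfl
    · rcases c1 with rfl | h'
      · left; rfl
      · exact absurd h' (by decide)
  · rintro (h | h) <;> obtain ⟨rfl, rfl⟩ := Prod.mk.injEq .. ▸ h <;>
      intro i hi j hj <;> fin_cases i <;> fin_cases j <;>
      first
        | exact absurd rfl hi
        | exact absurd rfl hj
        | assumption
end
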